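/- arXiv:2312.11081 — 5 statements merged into one kernel-verified Lean document; each statement's English description precedes it below -/
import Mathlib

section
/- Let B_x be the infinite lower-triangular weighted binomial matrix with entries (B_x)_{ij} = C(i,j)·x^{i-j}, where x is an indeterminate. Then B_x is totally positive in the ring ℤ[x] equipped with the coefficientwise order: every minor of B_x is a polynomial in x with nonnegative coefficients. -/
open Polynomial Finset

/-- The weighted binomial matrix `(B_x)_{ij} = C(i,j)·x^{i-j}`, with entries
in `ℤ[x]`. -/
noncomputable def binomialMatrixX (i j : ℕ) : Polynomial ℤ :=
  (i.choose j : Polynomial ℤ) * Polynomial.X ^ (i - j)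

/-- Staged matrices: `Mst s i j = C(s i, i-j) x^(i-j)` for `j ≤ i`, else 0. -/
noncomputable def Mst (s : ℕ → ℕ) : ℕ → ℕ → Polynomial ℤ :=
  fun i j => if j ≤ i then ((s i).choose (i - j) : Polynomial ℤ) * Polynomial.X ^ (i - j) else 0

/-- Coefficientwise total positivity for an infinite matrix over ℤ[x]. -/
def TPmat (A : ℕ → ℕ → Polynomial ℤ) : Prop :=
  ∀ (m : ℕ) (r c : Fin m → ℕ), StrictMono r → StrictMono c →
    ∀ i : ℕ, 0 ≤ (Matrix.det (Matrix.of fun p q : Fin m => A (r p) (c q))).coeff i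

/-- Elementary row operation: row k += X * row (k-1). -/
noncomputable def rowOp (k : ℕ) (A : ℕ → ℕ → Polynomial ℤ) : ℕ → ℕ → Polynomial ℤ :=
  Function.update A k (fun j => A k j + Polynomial.X * A (k-1) j)

lemma Mst_zero : Mst (fun _ => 0) = fun i j => if i = j then 1 else 0 := by
  funext i j
  unfold Mst
  rcases lt_trichotomy j i with h | h | h
  · simp [h.le, Nat.choose_eq_zero_of_lt (Nat.sub_pos_of_lt h), h.ne']
  · simp [h]
  · simp [h.ne, not_le.mpr h]

lemma TP_base : TPmat (Mst fun _ => 0) := by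
  rw [Mst_zero]
  intro m r c hr hc i
  by_cases hrc : r = c
  · subst hrc
    have : (Matrix.of fun p q : Fin m => if r p = r q then (1 : Polynomial ℤ) else 0) = 1 := by
      ext p q
      simp [Matrix.one_apply, hr.injective.eq_iff]
    rw [this, Matrix.det_one]
    rcases i with _ | i <;> simp [Polynomial.coeff_one]
  · by_cases h1 : Set.range r ⊆ Set.range c
    · by_cases h2 : Set.range c ⊆ Set.range r
      · have hre : Set.range r = Set.range c := le_antisymm h1 h2
        haveI inst : WellFoundedLT (Fin m) := inferInstance
        exact absurd ((@StrictMono.range_inj (Fin m) ℕ _ _ inst r c hr hc).1 hre) hrc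
      · obtain ⟨x, hxc, hxr⟩ := Set.not_subset.mp h2
        obtain ⟨q, rfl⟩ := hxc
        have : Matrix.det (Matrix.of fun p q' : Fin m =>
            if r p = c q' then (1 : Polynomial ℤ) else 0) = 0 := by
          apply Matrix.det_eq_zero_of_column_eq_zero q
          intro p
          have : r p ≠ c q := fun h => hxr ⟨p, h⟩
          simp [Matrix.of_apply, this]
        rw [this]; simp
    · obtain ⟨x, hxr, hxc⟩ := Set.not_subset.mp h1
      obtain ⟨p, rfl⟩ := hxr
      have : Matrix.det (Matrix.of fun p' q : Fin m =>
          if r p' = c q then (1 : Polynomial ℤ) else 0) = 0 := by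
        apply Matrix.det_eq_zero_of_row_eq_zero p
        intro q
        have : r p ≠ c q := fun h => hxc ⟨q, h.symm⟩
        simp [Matrix.of_apply, this]
      rw [this]; simp

lemma rowOp_TP {A : ℕ → ℕ → Polynomial ℤ} (k : ℕ) (hk : 1 ≤ k) (h : TPmat A) :
    TPmat (rowOp k A) := by
  intro m r c hr hc i
  by_cases hkr : ∃ p, r p = k
  · obtain ⟨p₀, hp₀⟩ := hkr
    set N : Matrix (Fin m) (Fin m) (Polynomial ℤ) :=
      Matrix.of (fun p q => A (r p) (c q)) with hN
    have hmat : (Matrix.of fun p q : Fin m => rowOp k A (r p) (c q)) =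
        Matrix.updateRow N p₀
          ((fun q => A k (c q)) + (Polynomial.X : Polynomial ℤ) • fun q => A (k-1) (c q)) := by
      ext p q
      by_cases hp : p = p₀
      · subst hp
        simp [rowOp, Function.update_apply, hp₀, Matrix.updateRow_self, smul_eq_mul]
      · have hne : r p ≠ k := fun hh => hp (hr.injective (hh.trans hp₀.symm))
        simp [rowOp, Function.update_apply, hne, Matrix.updateRow_ne hp, hN]
    rw [hmat, Matrix.det_updateRow_add, Matrix.det_updateRow_smul]
    have h1 : Matrix.updateRow N p₀ (fun q => A k (c q)) = N := by
      have h2 : (fun q => A k (c q)) = N p₀ := by funext q; simp [hN, hp₀]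
      rw [h2, Matrix.updateRow_eq_self]
    rw [h1]
    set D := (Matrix.updateRow N p₀ fun q => A (k-1) (c q)).det with hD
    have hDnn : ∀ n, 0 ≤ D.coeff n := by
      by_cases hk1 : ∃ p₁, r p₁ = k - 1
      · obtain ⟨p₁, hp₁⟩ := hk1
        have hpne : p₁ ≠ p₀ := by
          intro hh
          rw [hh, hp₀] at hp₁
          omega
        have hz : D = 0 := by
          apply Matrix.det_zero_of_row_eq hpne
          funext q
          rw [Matrix.updateRow_ne hpne, Matrix.updateRow_self]
          simp [hN, hp₁]
        intro n; rw [hz]; simp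
      · set r' : Fin m → ℕ := Function.update r p₀ (k-1) with hr'
        have hmono : StrictMono r' := by
          intro a b hab
          have hrne : ∀ p, r p ≠ k - 1 := fun p hh => hk1 ⟨p, hh⟩
          by_cases ha : a = p₀ <;> by_cases hb : b = p₀
          · exact absurd (ha.trans hb.symm) hab.ne
          · have h4 : k < r b := by
              have := hr hab
              rwa [ha, hp₀] at this
            rw [hr', Function.update_apply, Function.update_apply, if_pos ha, if_neg hb]
            omega
          · have h4 : r a < k := by
              have := hr hab
              rwa [hb, hp₀] at this
            rw [hr', Function.update_apply, Function.update_apply, if_neg ha, if_pos hb]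
            have := hrne a
            omega
          · rw [hr', Function.update_apply, Function.update_apply, if_neg ha, if_neg hb]
            exact hr hab
        have heq : Matrix.updateRow N p₀ (fun q => A (k-1) (c q)) =
            Matrix.of fun p q => A (r' p) (c q) := by
          ext p q
          by_cases hp : p = p₀
          · subst hp
            simp [Matrix.updateRow_self, hr', Function.update_apply]
          · simp [Matrix.updateRow_ne hp, hr', Function.update_apply, hp, hN]
        intro n
        rw [hD, heq]
        exact h m r' c hmono hc n
    have hNnn := h m r c hr hc
    rcases i with _ | n
    · have : (Polynomial.X * D).coeff 0 = 0 := by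
        rw [Polynomial.mul_coeff_zero]; simp
      rw [Polynomial.coeff_add, this, add_zero]
      exact hNnn 0
    · rw [Polynomial.coeff_add, Polynomial.coeff_X_mul]
      exact add_nonneg (hNnn _) (hDnn n)
  · have heq : (Matrix.of fun p q : Fin m => rowOp k A (r p) (c q)) =
        Matrix.of fun p q : Fin m => A (r p) (c q) := by
      ext p q
      have hne : r p ≠ k := fun hh => hkr ⟨p, hh⟩
      simp [rowOp, Function.update_apply, hne]
    rw [heq]
    exact h m r c hr hc i

lemma op_eq (t k : ℕ) (ht : 1 ≤ t) (hk : 1 ≤ k) (s : ℕ → ℕ)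
    (h1 : s k = t - 1) (h2 : s (k - 1) = t - 1) :
    Mst (Function.update s k t) = rowOp k (Mst s) := by
  funext i j
  by_cases hik : k = i
  · subst hik
    have hL : Mst (Function.update s k t) k j =
        if j ≤ k then ((t.choose (k - j) : ℕ) : Polynomial ℤ) * Polynomial.X ^ (k - j) else 0 := by
      simp only [Mst, Function.update_self]
    have hR : rowOp k (Mst s) k j = Mst s k j + Polynomial.X * Mst s (k - 1) j := by
      simp only [rowOp, Function.update_self]
    rw [hL, hR]
    rcases lt_trichotomy j k with hj | hj | hj
    · obtain ⟨d, hd1, hd2⟩ : ∃ d, k - j = d + 1 ∧ k - 1 - j = d := ⟨k - 1 - j, by omega, rfl⟩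
      have hjk : j ≤ k := hj.le
      have hjk1 : j ≤ k - 1 := by omega
      have ht' : t = (t - 1) + 1 := by omega
      rw [if_pos hjk]
      simp only [Mst]
      rw [if_pos hjk, if_pos hjk1, h1, h2, hd1, hd2, ht']
      rw [Nat.choose_succ_succ']
      push_cast
      ring
    · subst hj
      have hne : ¬ (j ≤ j - 1) := by omega
      simp only [Mst]
      rw [if_neg hne, h1]
      simp
    · have hne : ¬ (j ≤ k) := by omega
      have hne1 : ¬ (j ≤ k - 1) := by omega
      rw [if_neg hne]
      simp only [Mst]
      rw [if_neg hne, if_neg hne1]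
      simp
  · simp only [Mst, rowOp, Function.update_of_ne (Ne.symm hik), Function.update_of_ne (Ne.symm hik)]

lemma inner (t : ℕ) (ht : 1 ≤ t) :
    ∀ (d : ℕ) (s : ℕ → ℕ), TPmat (Mst s) →
      (∀ i, t - 1 ≤ i → i < t + d → s i = t - 1) →
      TPmat (Mst (fun i => if t ≤ i ∧ i < t + d then t else s i)) := by
  intro d
  induction d with
  | zero =>
    intro s hTP hs
    have heq : (fun i => if t ≤ i ∧ i < t + 0 then t else s i) = s := by
      funext i
      rw [if_neg (by omega)]
    rw [heq]
    exact hTP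
  | succ d ih =>
    intro s hTP hs
    have hk : 1 ≤ t + d := by omega
    have h1 : s (t + d) = t - 1 := hs _ (by omega) (by omega)
    have h2 : s (t + d - 1) = t - 1 := hs _ (by omega) (by omega)
    have hTP1 : TPmat (Mst (Function.update s (t + d) t)) := by
      rw [op_eq t (t + d) ht hk s h1 h2]
      exact rowOp_TP _ hk hTP
    have hs1 : ∀ i, t - 1 ≤ i → i < t + d → Function.update s (t + d) t i = t - 1 := by
      intro i hi1 hi2
      rw [Function.update_of_ne (by omega)]
      exact hs i hi1 (by omega)
    have hres := ih (Function.update s (t + d) t) hTP1 hs1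
    have hfun : (fun i => if t ≤ i ∧ i < t + d then t else Function.update s (t + d) t i)
        = fun i => if t ≤ i ∧ i < t + (d + 1) then t else s i := by
      funext i
      by_cases hi : t ≤ i ∧ i < t + d
      · rw [if_pos hi, if_pos ⟨hi.1, by omega⟩]
      · rw [if_neg hi, Function.update_apply]
        by_cases hieq : i = t + d
        · rw [if_pos hieq, if_pos (by omega)]
        · rw [if_neg hieq, if_neg (by omega)]
    rw [hfun] at hres
    exact hres

lemma outer (R : ℕ) : ∀ t, t ≤ R → TPmat (Mst (fun i => if i ≤ R then min i t else 0)) := by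
  intro t
  induction t with
  | zero =>
    intro _
    have heq : (fun i => if i ≤ R then min i 0 else 0) = (fun _ => 0 : ℕ → ℕ) := by
      funext i
      by_cases hi : i ≤ R <;> simp [hi]
    rw [heq]
    exact TP_base
  | succ t ih =>
    intro ht
    have hTP := ih (by omega)
    have hhyp : ∀ i, (t + 1) - 1 ≤ i → i < (t + 1) + (R - t) →
        (if i ≤ R then min i t else 0) = (t + 1) - 1 := by
      intro i hi1 hi2
      rw [if_pos (by omega)]
      omega
    have hres := inner (t + 1) (by omega) (R - t) _ hTP hhyp
    have hfun : (fun i => if t + 1 ≤ i ∧ i < (t + 1) + (R - t) then t + 1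
          else (if i ≤ R then min i t else 0))
        = fun i => if i ≤ R then min i (t + 1) else 0 := by
      funext i
      by_cases hi : i ≤ R
      · by_cases h2 : t + 1 ≤ i
        · rw [if_pos ⟨h2, by omega⟩, if_pos hi]
          omega
        · rw [if_neg (by omega), if_pos hi, if_pos hi]
          omega
      · rw [if_neg (by omega), if_neg hi, if_neg hi]
    rw [hfun] at hres
    exact hres

/-- The weighted binomial matrix `B_x` is totally positive in
`ℤ[x]` with the coefficientwise order: every minor (indexed by strictly
increasing choices of rows and columns) is a polynomial in `x` with nonnegative
coefficients. -/
theorem binomialMatrixX_coefficientwise_totally_positive :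
    ∀ (m : ℕ) (r c : Fin m → ℕ), StrictMono r → StrictMono c →
      ∀ i : ℕ,
        0 ≤ (Matrix.det (Matrix.of fun p q : Fin m => binomialMatrixX (r p) (c q))).coeff i := by
  intro m r c hr hc i
  rcases m with _ | n
  · rw [Matrix.det_fin_zero]
    rcases i with _ | i <;> simp [Polynomial.coeff_one]
  · set R := r (Fin.last n) with hR
    have hTP := outer R R le_rfl
    have heq : (Matrix.of fun p q : Fin (n + 1) => binomialMatrixX (r p) (c q)) =
        Matrix.of fun p q => Mst (fun i => if i ≤ R then min i R else 0) (r p) (c q) := by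
      refine Matrix.ext fun p q => ?_
      have hpR : r p ≤ R := hr.monotone (Fin.le_last p)
      simp only [Matrix.of_apply]
      unfold binomialMatrixX Mst
      have hstage : (fun i => if i ≤ R then i ⊓ R else 0) (r p) = r p := by
        simp [if_pos hpR, min_eq_left hpR]
      rw [hstage]
      by_cases hq : c q ≤ r p
      · rw [if_pos hq, Nat.choose_symm hq]
      · rw [if_neg hq, Nat.choose_eq_zero_of_lt (lt_of_not_ge hq)]
        simp
    rw [heq]
    exact hTP (n + 1) r c hr hc i
end

section
/- Let A and D be matrices with entries in a partially ordered commutative ring, with A tridiagonal and D diagonal. If A is totally positive of order r and D has nonnegative entries, then A + D is totally positive of order r. -/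
/-!
Adding `c ≥ 0` at the diagonal position `(i, i)` only changes the row through `i` of a minor, so
by multilinearity the new minor is the old one plus `c` times the cofactor of the entry `(i, i)`.
If that entry lies on the diagonal of the minor, the cofactor is a smaller minor of the
tridiagonal matrix, hence nonnegative. Otherwise, say the entry sits in row `k` and column
`l > k`; then tridiagonality forces the rows from `k` on into the columns from `l` on, which
are fewer, and the determinant vanishes. A given minor of `A + D` sees only finitely many
diagonal entries of `D`, and these are added one at a time.
-/

open Finset

namespace Matrix

def IsTridiagonal {R : Type*} [Zero R] (A : Matrix ℕ ℕ R) : Prop :=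
  ∀ ⦃i j : ℕ⦄, i + 1 < j ∨ j + 1 < i → A i j = 0

def IsTotallyPositiveOfOrder {m n R : Type*} [Preorder m] [Preorder n] [CommRing R]
    [PartialOrder R] (r : ℕ) (A : Matrix m n R) : Prop :=
  ∀ k ≤ r, ∀ (f : Fin k → m) (g : Fin k → n), StrictMono f → StrictMono g →
    0 ≤ (A.submatrix f g).det

variable {R : Type*} [CommRing R]

theorem det_eq_zero_of_zero_block {n : Type*} [Fintype n] [DecidableEq n] (M : Matrix n n R)
    {s t : Finset n} (hM : ∀ i ∈ s, ∀ j ∉ t, M i j = 0) (hst : #t < #s) : M.det = 0 := by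
  rw [det_apply']
  refine sum_eq_zero fun σ _ => ?_
  suffices ∃ j, M (σ j) j = 0 by
    obtain ⟨j, hj⟩ := this
    exact mul_eq_zero_of_right _ (prod_eq_zero (mem_univ j) hj)
  by_contra! hσ
  have hmaps : Set.MapsTo σ.symm s t := fun i hi => by
    by_contra hj
    exact hσ (σ.symm i) (by simpa using hM i hi _ hj)
  exact hst.not_ge (card_le_card_of_injOn σ.symm hmaps σ.symm.injective.injOn)

theorem det_updateRow_single_self {n : ℕ} (M : Matrix (Fin (n + 1)) (Fin (n + 1)) R)
    (k : Fin (n + 1)) (c : R) :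
    (M.updateRow k (Pi.single k c)).det = c * (M.submatrix k.succAbove k.succAbove).det := by
  have hsingle : Pi.single k c = c • Pi.single k (1 : R) := by
    rw [← Pi.single_smul', smul_eq_mul, mul_one]
  rw [hsingle, det_updateRow_smul, ← adjugate_apply,
    adjugate_fin_succ_eq_det_submatrix, (Even.add_self (k : ℕ)).neg_one_pow, one_mul]

theorem IsTridiagonal.add_single {A : Matrix ℕ ℕ R} (hA : A.IsTridiagonal) (i : ℕ) (c : R) :
    (A + single i i c).IsTridiagonal := fun j l hjl => by
  rw [add_apply, hA hjl, single_apply_of_ne _ _ _ _ _ (by omega), add_zero]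

theorem IsTridiagonal.det_submatrix_updateRow_single_eq_zero {A : Matrix ℕ ℕ R}
    (hA : A.IsTridiagonal) {m : ℕ} {f g : Fin m → ℕ} (hf : StrictMono f) (hg : StrictMono g)
    {k l : Fin m} (hkl : k ≠ l) (hfg : f k = g l) (c : R) :
    ((A.submatrix f g).updateRow k (Pi.single l c)).det = 0 := by
  rcases hkl.lt_or_gt with hlt | hgt
  · refine det_eq_zero_of_zero_block _ (s := Ici k) (t := Ici l) (fun i hi j hj => ?_) ?_
    · rw [mem_Ici] at hi hj
      rcases hi.eq_or_lt with rfl | hki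
      · rw [updateRow_self, Pi.single_eq_of_ne (by omega)]
      · rw [updateRow_ne hki.ne', submatrix_apply]
        have hgj : g j < g l := hg (not_le.mp hj)
        have hfi : f k < f i := hf hki
        exact hA (by omega)
    · simp only [Fin.card_Ici]
      omega
  · refine det_eq_zero_of_zero_block _ (s := Iic k) (t := Iic l) (fun i hi j hj => ?_) ?_
    · rw [mem_Iic] at hi hj
      rcases hi.eq_or_lt with rfl | hik
      · rw [updateRow_self, Pi.single_eq_of_ne (by omega)]
      · rw [updateRow_ne hik.ne, submatrix_apply]
        have hgj : g l < g j := hg (not_le.mp hj)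
        have hfi : f i < f k := hf hik
        exact hA (by omega)
    · simp only [Fin.card_Iic]
      omega

variable [PartialOrder R] [IsOrderedRing R]

theorem IsTotallyPositiveOfOrder.add_single_of_isTridiagonal {r : ℕ} {A : Matrix ℕ ℕ R}
    (hTP : A.IsTotallyPositiveOfOrder r) (hA : A.IsTridiagonal) (i : ℕ) {c : R} (hc : 0 ≤ c) :
    (A + single i i c).IsTotallyPositiveOfOrder r := by
  intro m hm f g hf hg
  by_cases hi : ∃ k l, f k = i ∧ g l = i
  · obtain ⟨k, l, rfl, hl⟩ := hi
    have hsub : (A + single (f k) (f k) c).submatrix f g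
        = (A.submatrix f g).updateRow k (A.submatrix f g k + Pi.single l c) := by
      ext p q
      rcases eq_or_ne p k with rfl | hp
      · simp [single_apply, Pi.single_apply, ← hl, hg.injective.eq_iff, eq_comm]
      · simp [updateRow_ne hp, hf.injective.eq_iff, Ne.symm hp]
    rw [hsub, det_updateRow_add, updateRow_eq_self]
    refine add_nonneg (hTP m hm f g hf hg) ?_
    rcases eq_or_ne k l with rfl | hkl
    · obtain ⟨n, rfl⟩ := Nat.exists_eq_add_one_of_ne_zero k.pos.ne'
      rw [det_updateRow_single_self, submatrix_submatrix]
      exact mul_nonneg hc (hTP n (by omega) _ _ (hf.comp (Fin.strictMono_succAbove k))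
        (hg.comp (Fin.strictMono_succAbove k)))
    · rw [hA.det_submatrix_updateRow_single_eq_zero hf hg hkl hl.symm]
  · have hsub : (A + single i i c).submatrix f g = A.submatrix f g := by
      ext p q
      rw [submatrix_apply, add_apply, submatrix_apply,
        single_apply_of_ne _ _ _ _ _ fun h => hi ⟨p, q, h.1.symm, h.2.symm⟩, add_zero]
    rw [hsub]
    exact hTP m hm f g hf hg

theorem IsTotallyPositiveOfOrder.add_sum_single_of_isTridiagonal {r : ℕ} {A : Matrix ℕ ℕ R}
    (hTP : A.IsTotallyPositiveOfOrder r) (hA : A.IsTridiagonal) (s : Finset ℕ) {d : ℕ → R}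
    (hd : ∀ i ∈ s, 0 ≤ d i) :
    (A + ∑ i ∈ s, single i i (d i)).IsTotallyPositiveOfOrder r := by
  induction s using Finset.induction_on generalizing A with
  | empty => simpa using hTP
  | insert a s ha ih =>
    rw [sum_insert ha, ← add_assoc]
    exact ih (hTP.add_single_of_isTridiagonal hA a (hd a (mem_insert_self a s)))
      (hA.add_single a (d a)) fun i hi => hd i (mem_insert_of_mem hi)

theorem IsTotallyPositiveOfOrder.add_diagonal_of_isTridiagonal {r : ℕ} {A : Matrix ℕ ℕ R}
    (hTP : A.IsTotallyPositiveOfOrder r) (hA : A.IsTridiagonal) {d : ℕ → R}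
    (hd : ∀ i, 0 ≤ d i) : (A + diagonal d).IsTotallyPositiveOfOrder r := by
  intro m hm f g hf hg
  have hsub : (A + diagonal d).submatrix f g
      = (A + ∑ i ∈ univ.image f, single i i (d i)).submatrix f g := by
    ext p q
    rcases eq_or_ne (f p) (g q) with h | h
    · simp [sum_apply, single_apply, ← h]
    · simp only [submatrix_apply, add_apply, diagonal_apply_ne _ h, sum_apply, single_apply]
      rw [sum_eq_zero fun i _ => if_neg fun hi : i = f p ∧ i = g q => h (hi.1 ▸ hi.2)]
  rw [hsub]
  exact hTP.add_sum_single_of_isTridiagonal hA _ (fun i _ => hd i) m hm f g hf hg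

end Matrix

/-- **tridiagonal comparison theorem.** Let `A` be tridiagonal and
`D` diagonal with nonnegative diagonal entries, over a partially ordered
commutative ring.  If `A` is totally positive of order `r`, then so is `A + D`. -/
theorem tridiagonal_comparison {R : Type*} [CommRing R] [PartialOrder R] [IsOrderedRing R] (r : ℕ)
    (A D : ℕ → ℕ → R)
    (hA : ∀ i j : ℕ, 1 < |(i : ℤ) - (j : ℤ)| → A i j = 0)
    (hDoff : ∀ i j : ℕ, i ≠ j → D i j = 0)
    (hDpos : ∀ i : ℕ, 0 ≤ D i i)
    (hTP : ∀ m : ℕ, m ≤ r → ∀ (rr cc : Fin m → ℕ), StrictMono rr → StrictMono cc →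
        0 ≤ Matrix.det (Matrix.of fun p q : Fin m => A (rr p) (cc q))) :
    ∀ m : ℕ, m ≤ r → ∀ (rr cc : Fin m → ℕ), StrictMono rr → StrictMono cc →
      0 ≤ Matrix.det (Matrix.of fun p q : Fin m => A (rr p) (cc q) + D (rr p) (cc q)) := by
  have hTri : (Matrix.of A).IsTridiagonal := fun i j hij => hA i j (by rw [lt_abs]; omega)
  have hdiag : Matrix.of D = Matrix.diagonal fun i => D i i := by
    ext i j
    rcases eq_or_ne i j with rfl | hij
    · simp
    · simp [hij, hDoff i j hij]
  have hTPA : (Matrix.of A).IsTotallyPositiveOfOrder r := hTP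
  have := hTPA.add_diagonal_of_isTridiagonal hTri hDpos
  rwa [← hdiag] at this
end

section
/- Every nonzero k×k minor of a tridiagonal matrix (over any commutative ring) factors as a product of off-diagonal entries and contiguous principal minors, with the sizes of the contiguous principal minors summing (together with the number of off-diagonal factors) to k. -/
open Finset



private lemma det_single_row {R : Type*} [CommRing R] {n : ℕ}
    (M : Matrix (Fin (n+1)) (Fin (n+1)) R) (h : ∀ q, q ≠ 0 → M 0 q = 0) :
    M.det = M 0 0 * (M.submatrix Fin.succ Fin.succ).det := by
  rw [Matrix.det_succ_row_zero]
  rw [Finset.sum_eq_single 0]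
  · simp [Fin.succAbove_zero]
  · intro q _ hq; simp [h q hq]
  · simp

private lemma det_single_col {R : Type*} [CommRing R] {n : ℕ}
    (M : Matrix (Fin (n+1)) (Fin (n+1)) R) (h : ∀ p, p ≠ 0 → M p 0 = 0) :
    M.det = M 0 0 * (M.submatrix Fin.succ Fin.succ).det := by
  rw [Matrix.det_succ_column_zero]
  rw [Finset.sum_eq_single 0]
  · simp [Fin.succAbove_zero]
  · intro p _ hp; simp [h p hp]
  · simp

private lemma det_block_lower {R : Type*} [CommRing R] {m n : ℕ}
    (M : Matrix (Fin (m+n)) (Fin (m+n)) R)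
    (h : ∀ i j : Fin (m+n), (j : ℕ) < m → m ≤ (i : ℕ) → M i j = 0) :
    M.det = (M.submatrix (Fin.castAdd n) (Fin.castAdd n)).det *
      (M.submatrix (Fin.natAdd m) (Fin.natAdd m)).det := by
  rw [← Matrix.det_submatrix_equiv_self finSumFinEquiv M,
    ← Matrix.fromBlocks_toBlocks (M.submatrix ⇑finSumFinEquiv ⇑finSumFinEquiv)]
  have hz : (M.submatrix ⇑finSumFinEquiv ⇑finSumFinEquiv).toBlocks₂₁ = 0 := by
    ext i j
    simp only [Matrix.toBlocks₂₁, Matrix.submatrix_apply, Matrix.of_apply, Matrix.zero_apply,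
      finSumFinEquiv_apply_left, finSumFinEquiv_apply_right]
    exact h _ _ (by simp) (by simp)
  rw [hz, Matrix.det_fromBlocks_zero₂₁]
  congr 1 <;> · ext i j; simp [Matrix.toBlocks₁₁, Matrix.toBlocks₂₂]

private lemma det_split {R : Type*} [CommRing R] {k m n : ℕ} (hk : k = m + n)
    (M : Matrix (Fin k) (Fin k) R)
    (h : (∀ i j : Fin k, (j : ℕ) < m → m ≤ (i : ℕ) → M i j = 0) ∨
         (∀ i j : Fin k, (i : ℕ) < m → m ≤ (j : ℕ) → M i j = 0)) :
    M.det = (Matrix.of fun i j : Fin m => M ⟨i, by omega⟩ ⟨j, by omega⟩).det *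
      (Matrix.of fun i j : Fin n => M ⟨m + i, by omega⟩ ⟨m + j, by omega⟩).det := by
  subst hk
  rcases h with h | h
  · rw [det_block_lower M h]
    congr 1 <;> · congr 1; ext i j; simp [Fin.castAdd, Fin.natAdd, Fin.castLE]
  · rw [← Matrix.det_transpose M, det_block_lower M.transpose (fun i j hj hi => h j i hj hi)]
    have e1 : M.transpose.submatrix (Fin.castAdd n) (Fin.castAdd n)
        = (M.submatrix (Fin.castAdd n) (Fin.castAdd n)).transpose := rfl
    have e2 : M.transpose.submatrix (Fin.natAdd m) (Fin.natAdd m)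
        = (M.submatrix (Fin.natAdd m) (Fin.natAdd m)).transpose := rfl
    rw [e1, e2, Matrix.det_transpose, Matrix.det_transpose]
    congr 1 <;> · congr 1; ext i j; simp [Fin.castAdd, Fin.natAdd, Fin.castLE]


private lemma tri_aux {R : Type*} [CommRing R] (A : ℕ → ℕ → R)
    (hA : ∀ i j : ℕ, 1 < |(i : ℤ) - (j : ℤ)| → A i j = 0) :
    ∀ k : ℕ, ∀ r c : Fin k → ℕ, StrictMono r → StrictMono c →
    Matrix.det (Matrix.of fun p q : Fin k => A (r p) (c q)) ≠ 0 →
    ∃ (offs : List (ℕ × ℕ)) (blocks : List (ℕ × ℕ)),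
      (∀ p ∈ offs, (p.1 : ℤ) - (p.2 : ℤ) = 1 ∨ (p.2 : ℤ) - (p.1 : ℤ) = 1) ∧
      offs.length + (blocks.map Prod.snd).sum = k ∧
      Matrix.det (Matrix.of fun p q : Fin k => A (r p) (c q))
        = (offs.map fun p => A p.1 p.2).prod *
            (blocks.map fun b =>
              Matrix.det (Matrix.of fun i j : Fin b.2 => A (b.1 + i) (b.1 + j))).prod := by
  intro k
  induction k using Nat.strong_induction_on with
  | _ k IH =>
  intro r c hr hc hne
  classical
  match k, r, c, hr, hc, hne, IH with
  | 0, r, c, hr, hc, hne, IH =>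
    exact ⟨[], [], by simp, by simp, by simp [Matrix.det_fin_zero]⟩
  | (n+1), r, c, hr, hc, hne, IH =>
    rcases lt_trichotomy (r 0) (c 0) with hab | hab | hab
    · -- r 0 < c 0 : need c 0 = r 0 + 1, first row has single entry
      by_cases hb1 : c 0 = r 0 + 1
      · have hrow : ∀ q : Fin (n+1), q ≠ 0 → A (r 0) (c q) = 0 := by
          intro q hq
          have h0q : (0 : Fin (n+1)) < q := by
            rw [Fin.lt_def]; simp only [Fin.val_zero]
            exact Nat.pos_of_ne_zero (fun h => hq (Fin.ext h))
          have := hc h0q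
          apply hA
          rw [lt_abs]; right; push_cast; omega
        rw [det_single_row _ (fun q hq => hrow q hq)] at hne ⊢
        have hsub := IH n (by omega) (r ∘ Fin.succ) (c ∘ Fin.succ)
          (hr.comp Fin.strictMono_succ) (hc.comp Fin.strictMono_succ)
          (right_ne_zero_of_mul hne)
        obtain ⟨offs, blocks, h1, h2, h3⟩ := hsub
        refine ⟨(r 0, c 0) :: offs, blocks, ?_, ?_, ?_⟩
        · intro p hp
          rcases List.mem_cons.mp hp with rfl | hp
          · right; show (c 0 : ℤ) - (r 0 : ℤ) = 1; push_cast; omega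
          · exact h1 p hp
        · simp only [List.length_cons]; omega
        · have : (Matrix.of fun p q : Fin (n+1) => A (r p) (c q)).submatrix Fin.succ Fin.succ
            = Matrix.of fun p q : Fin n => A ((r ∘ Fin.succ) p) ((c ∘ Fin.succ) q) := rfl
          rw [this, h3]
          simp only [List.map_cons, List.prod_cons, Matrix.of_apply]
          ring
      · -- first row entirely zero
        exfalso
        apply hne
        apply Matrix.det_eq_zero_of_row_eq_zero 0
        intro q
        have hq : c 0 ≤ c q := by
          rcases eq_or_ne q 0 with rfl | hq
          · exact le_rfl
          · exact le_of_lt (hc (by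
              rw [Fin.lt_def]; simp only [Fin.val_zero]
              exact Nat.pos_of_ne_zero (fun h => hq (Fin.ext h))))
        exact hA _ _ (by rw [lt_abs]; right; push_cast; omega)
    · -- r 0 = c 0 : block case
      set P : ℕ → Prop := fun m => ∀ p : Fin (n+1), (p : ℕ) < m → r p = r 0 + p ∧ c p = c 0 + p
        with hP
      have hP1 : P 1 := by
        intro p hp
        have : p = 0 := Fin.ext (by simp only [Fin.val_zero]; omega)
        subst this; simp
      set m := Nat.findGreatest P (n+1) with hm
      have hm1 : 1 ≤ m := by rw [hm]; exact Nat.le_findGreatest (by omega) hP1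
      have hmk : m ≤ n + 1 := by rw [hm]; exact Nat.findGreatest_le _
      have hPm : P m := by rw [hm]; exact Nat.findGreatest_spec (m := 1) (n := n + 1) (by omega) hP1
      by_cases hmn : m = n + 1
      · -- whole minor is a contiguous principal minor
        refine ⟨[], [(r 0, n+1)], by simp, by simp, ?_⟩
        have : (Matrix.of fun p q : Fin (n+1) => A (r p) (c q))
            = Matrix.of fun i j : Fin (n+1) => A (r 0 + i) (r 0 + j) := by
          ext i j
          obtain ⟨hri, _⟩ := hPm i (by omega)
          obtain ⟨_, hcj⟩ := hPm j (by omega)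
          simp [hri, hcj, hab]
        rw [this]; simp
      · -- m < n+1
        have hmlt : m < n + 1 := lt_of_le_of_ne hmk hmn
        have hnP : ¬ P (m + 1) :=
          Nat.findGreatest_is_greatest (P := P) (n := n + 1) (k := m + 1)
            (by omega) (by omega)
        have hex : ∃ p : Fin (n+1), (p : ℕ) < m + 1 ∧
            ¬(r p = r 0 + p ∧ c p = c 0 + p) := by
          by_contra h
          push_neg at h
          exact hnP (fun p hp => h p hp)
        obtain ⟨pm, hpm, hbad⟩ := hex
        have hpmm : (pm : ℕ) = m := by
          by_contra h
          exact hbad (hPm pm (by omega))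
        -- lower bounds on r pm and c pm
        have hplow : r 0 + m ≤ r pm ∧ c 0 + m ≤ c pm := by
          obtain ⟨hr', hc'⟩ := hPm ⟨m - 1, by omega⟩ (by simp; omega)
          have h1 := hr (show (⟨m - 1, by omega⟩ : Fin (n+1)) < pm by
            rw [Fin.lt_def]; simp; omega)
          have h2 := hc (show (⟨m - 1, by omega⟩ : Fin (n+1)) < pm by
            rw [Fin.lt_def]; simp; omega)
          simp only [hr', hc'] at h1 h2
          constructor <;> omega
        have hsplit : (∀ i j : Fin (n+1), (j : ℕ) < m → m ≤ (i : ℕ) →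
              A (r i) (c j) = 0) ∨
            (∀ i j : Fin (n+1), (i : ℕ) < m → m ≤ (j : ℕ) → A (r i) (c j) = 0) := by
          rcases not_and_or.mp hbad with hb | hb
          · left
            intro i j hj hi
            have hri : r pm ≤ r i := hr.monotone (by rw [Fin.le_def]; omega)
            have hcj : c j = c 0 + j := (hPm j (by omega)).2
            have hb' : r pm ≠ r 0 + m := fun h => hb (by rw [hpmm]; exact h)
            have : r 0 + m + 1 ≤ r pm := by
              have := hplow.1
              omega
            apply hA
            rw [lt_abs]; left; push_cast; omega
          · right
            intro i j hi hj
            have hcj : c pm ≤ c j := hc.monotone (by rw [Fin.le_def]; omega)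
            have hri : r i = r 0 + i := (hPm i (by omega)).1
            have hb' : c pm ≠ c 0 + m := fun h => hb (by rw [hpmm]; exact h)
            have : c 0 + m + 1 ≤ c pm := by
              have := hplow.2
              omega
            apply hA
            rw [lt_abs]; right; push_cast; omega
        have hk : n + 1 = m + (n + 1 - m) := by omega
        rw [det_split hk _ (by
          rcases hsplit with h | h
          · exact Or.inl (fun i j hj hi => h i j hj hi)
          · exact Or.inr (fun i j hi hj => h i j hi hj))] at hne ⊢
        have htop : (Matrix.of fun i j : Fin m =>
              (Matrix.of fun p q : Fin (n+1) => A (r p) (c q)) ⟨i, by omega⟩ ⟨j, by omega⟩)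
            = Matrix.of fun i j : Fin m => A (r 0 + i) (r 0 + j) := by
          ext i j
          obtain ⟨hri, _⟩ := hPm ⟨i, by omega⟩ (by simpa using i.2)
          obtain ⟨_, hcj⟩ := hPm ⟨j, by omega⟩ (by simpa using j.2)
          simp only [Matrix.of_apply] at hri hcj ⊢
          rw [hri, hcj, hab]
        set r' : Fin (n + 1 - m) → ℕ := fun i => r ⟨m + i, by omega⟩ with hr'def
        set c' : Fin (n + 1 - m) → ℕ := fun i => c ⟨m + i, by omega⟩ with hc'def
        have hbot : (Matrix.of fun i j : Fin (n + 1 - m) =>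
              (Matrix.of fun p q : Fin (n+1) => A (r p) (c q)) ⟨m + i, by omega⟩ ⟨m + j, by omega⟩)
            = Matrix.of fun p q : Fin (n + 1 - m) => A (r' p) (c' q) := rfl
        rw [htop, hbot] at hne ⊢
        have hsub := IH (n + 1 - m) (by omega) r' c'
          (fun i j hij => hr (by rw [Fin.lt_def]; simp; omega))
          (fun i j hij => hc (by rw [Fin.lt_def]; simp; omega))
          (right_ne_zero_of_mul hne)
        obtain ⟨offs, blocks, h1, h2, h3⟩ := hsub
        refine ⟨offs, (r 0, m) :: blocks, h1, ?_, ?_⟩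
        · simp only [List.map_cons, List.sum_cons]; omega
        · rw [h3]
          simp only [List.map_cons, List.prod_cons]
          ring
    · -- c 0 < r 0 : need r 0 = c 0 + 1, first column has single entry
      by_cases hb1 : r 0 = c 0 + 1
      · have hcol : ∀ p : Fin (n+1), p ≠ 0 → A (r p) (c 0) = 0 := by
          intro p hp
          have h0p : (0 : Fin (n+1)) < p := by
            rw [Fin.lt_def]; simp only [Fin.val_zero]
            exact Nat.pos_of_ne_zero (fun h => hp (Fin.ext h))
          have := hr h0p
          apply hA
          rw [lt_abs]; left; push_cast; omega
        rw [det_single_col _ (fun p hp => hcol p hp)] at hne ⊢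
        have hsub := IH n (by omega) (r ∘ Fin.succ) (c ∘ Fin.succ)
          (hr.comp Fin.strictMono_succ) (hc.comp Fin.strictMono_succ)
          (right_ne_zero_of_mul hne)
        obtain ⟨offs, blocks, h1, h2, h3⟩ := hsub
        refine ⟨(r 0, c 0) :: offs, blocks, ?_, ?_, ?_⟩
        · intro p hp
          rcases List.mem_cons.mp hp with rfl | hp
          · left; show (r 0 : ℤ) - (c 0 : ℤ) = 1; push_cast; omega
          · exact h1 p hp
        · simp only [List.length_cons]; omega
        · have : (Matrix.of fun p q : Fin (n+1) => A (r p) (c q)).submatrix Fin.succ Fin.succ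
            = Matrix.of fun p q : Fin n => A ((r ∘ Fin.succ) p) ((c ∘ Fin.succ) q) := rfl
          rw [this, h3]
          simp only [List.map_cons, List.prod_cons, Matrix.of_apply]
          ring
      · exfalso
        apply hne
        apply Matrix.det_eq_zero_of_column_eq_zero 0
        intro p
        have hp : r 0 ≤ r p := by
          rcases eq_or_ne p 0 with rfl | hp
          · exact le_rfl
          · exact le_of_lt (hr (by
              rw [Fin.lt_def]; simp only [Fin.val_zero]
              exact Nat.pos_of_ne_zero (fun h => hp (Fin.ext h))))
        exact hA _ _ (by rw [lt_abs]; left; push_cast; omega)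

/-- Every nonzero `k×k` minor of a tridiagonal matrix (over a
commutative ring) factors as a product of off-diagonal entries and contiguous
principal minors, with the number of off-diagonal factors plus the sizes of the
contiguous principal minors summing to `k`. -/
theorem tridiagonal_minor_factorization {R : Type*} [CommRing R]
    (A : ℕ → ℕ → R)
    (hA : ∀ i j : ℕ, 1 < |(i : ℤ) - (j : ℤ)| → A i j = 0)
    (k : ℕ) (r c : Fin k → ℕ) (hr : StrictMono r) (hc : StrictMono c)
    (hne : Matrix.det (Matrix.of fun p q : Fin k => A (r p) (c q)) ≠ 0) :
    ∃ (offs : List (ℕ × ℕ)) (blocks : List (ℕ × ℕ)),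
      (∀ p ∈ offs, (p.1 : ℤ) - (p.2 : ℤ) = 1 ∨ (p.2 : ℤ) - (p.1 : ℤ) = 1) ∧
      offs.length + (blocks.map Prod.snd).sum = k ∧
      Matrix.det (Matrix.of fun p q : Fin k => A (r p) (c q))
        = (offs.map fun p => A p.1 p.2).prod *
            (blocks.map fun b =>
              Matrix.det (Matrix.of fun i j : Fin b.2 => A (b.1 + i) (b.1 + j))).prod :=
  tri_aux A hA k r c hr hc hne
end

section
/- Let P be a row-finite infinite matrix over a commutative ring, and define the output matrix A = 𝒪(P) by a_{nk} = (P^n)_{0k}. Let B be a lower-triangular matrix with invertible diagonal entries. Then A·B = b_{00} · 𝒪(B^{-1} P B). -/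
/-!
Row-finite matrices form a monoid in which `B` is a unit with inverse `B⁻¹`, so
`(B⁻¹ P B)ⁿ = B⁻¹ (Pⁿ B)`. Since `B⁻¹` is lower triangular, its row `0` is `(B⁻¹)₀₀ e₀`; hence
row `0` of `B⁻¹ (Pⁿ B)` is `(B⁻¹)₀₀` times row `0` of `Pⁿ B`, which is row `n` of `𝒪(P) B`.
Reading row `0` of `B⁻¹ B = 1` the same way gives `(B⁻¹)₀₀ b₀₀ = 1`.
-/

/-- Row-finite infinite matrices: each row is a finitely supported function. -/
def RFMat (R : Type*) [Zero R] := ℕ → (ℕ →₀ R)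

namespace RFMat

variable {R : Type*} [CommRing R]

/-- Matrix product of row-finite matrices: `(P*Q)_{ik} = ∑_j P_{ij} Q_{jk}`. -/
noncomputable def mul (P Q : RFMat R) : RFMat R :=
  fun i => (P i).sum fun j a => a • Q j

/-- The identity matrix. -/
noncomputable def one : RFMat R := fun i => Finsupp.single i 1

/-- Matrix power `P^n`. -/
noncomputable def pow (P : RFMat R) : ℕ → RFMat R
  | 0 => one
  | n + 1 => mul (pow P n) P

/-- The output matrix `𝒪(P)`, whose `n`-th row is the `0`-th row of `P^n`. -/
noncomputable def out (P : RFMat R) : RFMat R := fun n => pow P n 0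

end RFMat

namespace RFMat

variable {R : Type*} [CommRing R]

lemma mul_apply (P Q : RFMat R) (i : ℕ) :
    mul P Q i = Finsupp.linearCombination R (fun j => Q j) (P i) :=
  (Finsupp.linearCombination_apply R (P i)).symm

protected lemma mul_assoc (P Q S : RFMat R) : mul (mul P Q) S = mul P (mul Q S) := by
  funext i
  simp only [mul_apply, Finsupp.linearCombination_linearCombination]

protected lemma one_mul (P : RFMat R) : mul one P = P := by
  funext i
  simp [mul_apply, one]

protected lemma mul_one (P : RFMat R) : mul P one = P := by
  funext i
  simp [mul, one, Finsupp.smul_single]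

noncomputable instance : Monoid (RFMat R) where
  mul := mul
  one := one
  mul_assoc := RFMat.mul_assoc
  one_mul := RFMat.one_mul
  mul_one := RFMat.mul_one
  npow n P := pow P n
  npow_zero _ := rfl
  npow_succ _ _ := rfl

lemma pow_conj (P U V : RFMat R) (hUV : mul U V = one) (hVU : mul V U = one) (n : ℕ) :
    pow (mul (mul V P) U) n = mul V (mul (pow P n) U) :=
  let u : (RFMat R)ˣ := ⟨V, U, hVU, hUV⟩
  (u.conj_pow P n).trans (RFMat.mul_assoc V (pow P n) U)

lemma mul_apply_zero (X Y : RFMat R) (hX : ∀ j, 0 < j → X 0 j = 0) :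
    mul X Y 0 = X 0 0 • Y 0 := by
  have hX0 : X 0 = Finsupp.single 0 (X 0 0) := by
    ext (_ | j)
    · simp
    · simp [hX (j + 1) j.succ_pos]
  rw [mul_apply, hX0]
  simp

lemma apply_zero_zero_mul_eq_one_of_mul_eq_one (X Y : RFMat R) (hX : ∀ j, 0 < j → X 0 j = 0)
    (hXY : mul X Y = one) : X 0 0 * Y 0 0 = 1 := by
  have h : mul X Y 0 0 = one 0 0 := by rw [hXY]
  simpa [mul_apply_zero X Y hX, one] using h

end RFMat

theorem output_matrix_right_multiplication_general {R : Type*} [CommRing R]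
    (P B Binv : RFMat R)
    (hBinvlt : ∀ i j : ℕ, i < j → Binv i j = 0)
    (hBB : RFMat.mul B Binv = RFMat.one)
    (hBB' : RFMat.mul Binv B = RFMat.one) :
    RFMat.mul (RFMat.out P) B
      = fun n => B 0 0 • (RFMat.out (RFMat.mul (RFMat.mul Binv P) B) n) := by
  have hdiag : Binv 0 0 * B 0 0 = 1 :=
    RFMat.apply_zero_zero_mul_eq_one_of_mul_eq_one Binv B (hBinvlt 0) hBB'
  funext n
  change RFMat.mul (RFMat.pow P n) B 0 = B 0 0 • RFMat.pow (RFMat.mul (RFMat.mul Binv P) B) n 0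
  rw [RFMat.pow_conj P B Binv hBB hBB' n, RFMat.mul_apply_zero _ _ (hBinvlt 0), smul_smul,
    mul_comm, hdiag, one_smul]

/-- **right-multiplication lemma.** Let `P` be a row-finite
matrix, `A = 𝒪(P)` its output matrix, and `B` lower-triangular with (two-sided
lower-triangular) inverse `Binv`.  Then `A·B = B_{00} • 𝒪(B⁻¹ P B)`. -/
theorem output_matrix_right_multiplication {R : Type*} [CommRing R]
    (P B Binv : RFMat R)
    (hBlt : ∀ i j : ℕ, i < j → B i j = 0)
    (hBinvlt : ∀ i j : ℕ, i < j → Binv i j = 0)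
    (hBB : RFMat.mul B Binv = RFMat.one)
    (hBB' : RFMat.mul Binv B = RFMat.one) :
    RFMat.mul (RFMat.out P) B
      = fun n => B 0 0 • (RFMat.out (RFMat.mul (RFMat.mul Binv P) B) n) :=
  output_matrix_right_multiplication_general P B Binv hBinvlt hBB hBB'
end

section
/- The tridiagonal univariate Laguerre production matrix P° (superdiagonal entries 1, diagonal entries 2n+λ, subdiagonal entries n(n-1+λ)) factors as P° = L·U, where L is the lower-bidiagonal matrix with 1 on the diagonal and 1,2,3,... on the subdiagonal, and U is the upper-bidiagonal matrix with 1 on the superdiagonal and λ, λ+1, λ+2, ... on the diagonal. Consequently, P° is totally positive in ℤ[λ] with the coefficientwise order. -/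
open Polynomial

/-- The tridiagonal univariate Laguerre production matrix `P°` over `ℤ[λ]`
(`λ = X`): superdiagonal `1`, diagonal `2n+λ`, subdiagonal `n(n-1+λ)`. -/
noncomputable def Pcirc : RFMat (Polynomial ℤ) :=
  fun n => Finsupp.single (n + 1) 1
    + Finsupp.single n (2 * (n : Polynomial ℤ) + X)
    + Finsupp.single (n - 1) ((n : Polynomial ℤ) * ((n : Polynomial ℤ) - 1 + X))

/-- The lower-bidiagonal matrix `L` with `1` on the diagonal and `1,2,3,…` on
the subdiagonal. -/
noncomputable def Lmat : RFMat (Polynomial ℤ) :=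
  fun n => Finsupp.single n 1 + Finsupp.single (n - 1) (n : Polynomial ℤ)

/-- The upper-bidiagonal matrix `U` with `1` on the superdiagonal and
`λ, λ+1, λ+2, …` on the diagonal. -/
noncomputable def Umat : RFMat (Polynomial ℤ) :=
  fun n => Finsupp.single (n + 1) 1 + Finsupp.single n (X + (n : Polynomial ℤ))

open Finset Function

theorem strictMono_iff_of_le_of_le_add_one {α : Type*} [Preorder α] {a b : α → ℕ}
    (ha : Injective a) (hb : Injective b) (hab : ∀ p, a p ≤ b p)
    (hba : ∀ p, b p ≤ a p + 1) :
    StrictMono a ↔ StrictMono b := by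
  refine ⟨fun hmono p q hpq => ?_, fun hmono p q hpq => ?_⟩
  · exact lt_of_le_of_ne (((hba p).trans (hmono hpq)).trans (hab q)) (hb.ne hpq.ne)
  · exact lt_of_le_of_ne (Nat.le_of_lt_succ (((hab p).trans_lt (hmono hpq)).trans_le (hba q)))
      (ha.ne hpq.ne)

theorem Matrix.det_mul_eq_sum_prod_mul_det_submatrix {m ι R : Type*} [Fintype m] [DecidableEq m]
    [Fintype ι] [CommRing R] (A : Matrix m ι R) (B : Matrix ι m R) :
    (A * B).det = ∑ f : m → ι, (∏ p, B (f p) p) * (A.submatrix id f).det := by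
  simp only [Matrix.det_apply', Matrix.mul_apply, prod_univ_sum, Fintype.piFinset_univ, mul_sum,
    Matrix.submatrix_apply, id]
  rw [sum_comm]
  refine sum_congr rfl fun f _ => sum_congr rfl fun σ _ => ?_
  rw [prod_mul_distrib]
  ring

namespace RFMat

variable {R : Type*} [CommRing R]

theorem mul_apply_eq_sum {P Q : RFMat R} {i : ℕ} {s : Finset ℕ} (h : (P i).support ⊆ s)
    (k : ℕ) : mul P Q i k = ∑ j ∈ s, P i j * Q j k := by
  rw [mul, Finsupp.sum_of_support_subset _ h _ (fun j _ => zero_smul R (Q j)),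
    Finsupp.finsetSum_apply]
  rfl

def IsLowerBidiagonal (A : RFMat R) : Prop :=
  ∀ n k, A n k ≠ 0 → k ≤ n ∧ n ≤ k + 1

def IsUpperBidiagonal (A : RFMat R) : Prop :=
  ∀ n k, A n k ≠ 0 → n ≤ k ∧ k ≤ n + 1

def IsTotallyPositive (S : Subsemiring R) (A : RFMat R) : Prop :=
  ∀ (m : ℕ) (r c : Fin m → ℕ), StrictMono r → StrictMono c →
    (Matrix.of fun p q => A (r p) (c q)).det ∈ S

theorem IsLowerBidiagonal.det_minor {A : RFMat R} (hA : IsLowerBidiagonal A) {m : ℕ}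
    {r c : Fin m → ℕ} (hr : StrictMono r) (hc : StrictMono c) :
    (Matrix.of fun p q => A (r p) (c q)).det = ∏ p, A (r p) (c p) := by
  rw [Matrix.det_apply', sum_eq_single 1 _ (by simp)]
  · simp
  intro σ _ hσ
  suffices ∃ p, A (r (σ p)) (c p) = 0 by
    obtain ⟨p, hp⟩ := this
    have hzero : ∏ p, A (r (σ p)) (c p) = 0 := prod_eq_zero (mem_univ p) hp
    simp [hzero]
  by_contra! hne
  have hband p := hA _ _ (hne p)
  have hrσ : StrictMono (r ∘ σ) :=
    (strictMono_iff_of_le_of_le_add_one hc.injective (hr.injective.comp σ.injective)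
      (fun p => (hband p).1) (fun p => (hband p).2)).1 hc
  have hσ_mono : StrictMono σ := fun p q hpq => hr.lt_iff_lt.1 (hrσ hpq)
  exact hσ (Equiv.ext fun p => congrFun hσ_mono.eq_id p)

theorem IsLowerBidiagonal.isTotallyPositive {S : Subsemiring R} {A : RFMat R}
    (hA : IsLowerBidiagonal A) (hAS : ∀ n k, A n k ∈ S) : IsTotallyPositive S A :=
  fun _ _ _ hr hc => hA.det_minor hr hc ▸ prod_mem fun _ _ => hAS _ _

theorem IsTotallyPositive.mul_of_isUpperBidiagonal {S : Subsemiring R} {A B : RFMat R}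
    (hA : IsTotallyPositive S A) (hB : IsUpperBidiagonal B) (hBS : ∀ n k, B n k ∈ S) :
    IsTotallyPositive S (mul A B) := by
  intro m r c hr hc
  set s := univ.biUnion fun p => (A (r p)).support
  have hminor : (Matrix.of fun p q => mul A B (r p) (c q))
      = Matrix.of (fun p (j : s) => A (r p) j) * Matrix.of (fun (j : s) q => B j (c q)) := by
    ext p q
    rw [Matrix.of_apply,
      mul_apply_eq_sum (subset_biUnion_of_mem (fun p => (A (r p)).support) (mem_univ p)),
      Matrix.mul_apply, ← sum_coe_sort]
    rfl
  rw [hminor, Matrix.det_mul_eq_sum_prod_mul_det_submatrix]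
  refine sum_mem fun f _ => ?_
  by_cases hf : ∃ p, B (f p) (c p) = 0
  · obtain ⟨p, hp⟩ := hf
    have hzero : ∏ p, B (f p) (c p) = 0 := prod_eq_zero (mem_univ p) hp
    simp only [Matrix.of_apply, hzero, zero_mul, zero_mem]
  by_cases hinj : Injective f
  · have hband p := hB _ _ (not_exists.1 hf p)
    have hf_mono : StrictMono fun p => (f p : ℕ) :=
      (strictMono_iff_of_le_of_le_add_one (Subtype.val_injective.comp hinj) hc.injective
        (fun p => (hband p).1) (fun p => (hband p).2)).2 hc
    exact mul_mem (prod_mem fun p _ => hBS _ _) (hA m r _ hr hf_mono)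
  · obtain ⟨p, q, hpq, hne⟩ := not_injective_iff.1 hinj
    rw [Matrix.det_zero_of_column_eq hne (by simp [hpq]), mul_zero]
    exact zero_mem S

end RFMat

theorem Pcirc_row (n : ℕ) : Pcirc n = Umat n + (n : ℤ[X]) • Umat (n - 1) := by
  ext1 k
  rcases n with _ | n
  · simp [Pcirc, Umat]
  · simp only [Pcirc, Umat, Finsupp.add_apply, Finsupp.smul_apply, Finsupp.single_apply,
      smul_eq_mul, Nat.add_sub_cancel]
    split_ifs <;> first | omega | (push_cast; ring)

theorem Pcirc_eq_mul : Pcirc = RFMat.mul Lmat Umat := by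
  funext n
  rw [RFMat.mul, Lmat,
    Finsupp.sum_add_index' (h := fun j a => a • Umat j) (fun _ => zero_smul _ _)
      (fun _ _ _ => add_smul _ _ _),
    Finsupp.sum_single_index (h := fun j a => a • Umat j) (zero_smul _ _),
    Finsupp.sum_single_index (h := fun j a => a • Umat j) (zero_smul _ _), one_smul, Pcirc_row]

theorem Lmat_isLowerBidiagonal : RFMat.IsLowerBidiagonal Lmat := by
  intro n k h
  contrapose! h
  simp only [Lmat, Finsupp.add_apply, Finsupp.single_apply]
  rw [if_neg (by omega), if_neg (by omega), add_zero]

theorem Umat_isUpperBidiagonal : RFMat.IsUpperBidiagonal Umat := by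
  intro n k h
  contrapose! h
  simp only [Umat, Finsupp.add_apply, Finsupp.single_apply]
  rw [if_neg (by omega), if_neg (by omega), add_zero]

theorem Lmat_mem_lifts (n k : ℕ) : Lmat n k ∈ lifts (Nat.castRingHom ℤ) := by
  simp only [Lmat, Finsupp.add_apply, Finsupp.single_apply]
  refine add_mem ?_ ?_ <;> split_ifs <;> simp [natCast_mem]

theorem Umat_mem_lifts (n k : ℕ) : Umat n k ∈ lifts (Nat.castRingHom ℤ) := by
  simp only [Umat, Finsupp.add_apply, Finsupp.single_apply]
  refine add_mem ?_ ?_ <;> split_ifs <;> simp [add_mem, X_mem_lifts, natCast_mem]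

/-- `P° = L·U`, and consequently `P°` is totally positive in
`ℤ[λ]` with the coefficientwise order: every minor is a polynomial in `λ` with
nonnegative coefficients. -/
theorem Pcirc_factorization_and_totally_positive :
    Pcirc = RFMat.mul Lmat Umat ∧
    (∀ (m : ℕ) (rr cc : Fin m → ℕ), StrictMono rr → StrictMono cc →
      ∀ i : ℕ,
        0 ≤ (Matrix.det (Matrix.of fun p q : Fin m => Pcirc (rr p) (cc q))).coeff i) := by
  refine ⟨Pcirc_eq_mul, fun m rr cc hrr hcc i => ?_⟩
  have hTP : RFMat.IsTotallyPositive (lifts (Nat.castRingHom ℤ)) (RFMat.mul Lmat Umat) :=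
    (Lmat_isLowerBidiagonal.isTotallyPositive Lmat_mem_lifts).mul_of_isUpperBidiagonal
      Umat_isUpperBidiagonal Umat_mem_lifts
  rw [Pcirc_eq_mul]
  obtain ⟨k, hk⟩ := (lifts_iff_coeff_lifts _).1 (hTP m rr cc hrr hcc) i
  exact hk ▸ k.cast_nonneg
end
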